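/- arXiv:2007.10046 — 5 statements merged into one kernel-verified Lean document; each statement's English description precedes it below -/
import Mathlib

section
/- Let Â, S be real n×n matrices, T invertible, G diagonal positive definite, with S symmetric and T⁻¹ Â T = G⁻¹ S. Then the matrix M = T G⁻¹ Tᵀ is positive definite and satisfies Â M = M Âᵀ. -/
/-! `M = T G⁻¹ Tᵀ` is congruent to the positive definite `G⁻¹`. Rewriting the hypothesis as
`Â T = T G⁻¹ S`, both `Â M` and `M Âᵀ` equal `T G⁻¹ S G⁻¹ Tᵀ`, since `G⁻¹` and `S` are
symmetric. -/

open Matrix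

theorem Matrix.mul_mul_mul_transpose_eq_of_mul_eq {n R : Type*} [Fintype n] [CommRing R]
    {A T D S : Matrix n n R} (hD : D.IsSymm) (hS : S.IsSymm) (h : A * T = T * D * S) :
    A * (T * D * Tᵀ) = (T * D * Tᵀ) * Aᵀ := by
  have hAT : (A * T)ᵀ = S * D * Tᵀ := by
    rw [h, transpose_mul, transpose_mul, hS.eq, hD.eq, Matrix.mul_assoc]
  calc A * (T * D * Tᵀ) = T * D * (S * D * Tᵀ) := by
        rw [← Matrix.mul_assoc, ← Matrix.mul_assoc, h]; simp only [Matrix.mul_assoc]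
    _ = (T * D * Tᵀ) * Aᵀ := by rw [← hAT, transpose_mul]; simp only [Matrix.mul_assoc]

theorem Matrix.PosDef.mul_mul_transpose_of_isUnit {n : Type*} [Fintype n] [DecidableEq n]
    {D T : Matrix n n ℝ} (hD : D.PosDef) (hT : IsUnit T.det) : (T * D * Tᵀ).PosDef := by
  have hTinj : Function.Injective T.vecMul :=
    vecMul_injective_iff_isUnit.mpr ((isUnit_iff_isUnit_det T).mpr hT)
  simpa [conjTranspose_eq_transpose_of_trivial] using hD.mul_mul_conjTranspose_same hTinj

theorem stmt_1 {n : ℕ} (Ahat T S G : Matrix (Fin n) (Fin n) ℝ)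
    (hT : IsUnit T.det) (hS : S.IsSymm)
    (g : Fin n → ℝ) (hg : ∀ i, 0 < g i) (hG : G = Matrix.diagonal g)
    (h : T⁻¹ * Ahat * T = G⁻¹ * S) :
    (T * G⁻¹ * Tᵀ).PosDef ∧ Ahat * (T * G⁻¹ * Tᵀ) = (T * G⁻¹ * Tᵀ) * Ahatᵀ := by
  have hGinv : G⁻¹.PosDef := (hG ▸ posDef_diagonal_iff.mpr hg).inv
  have hAT : Ahat * T = T * G⁻¹ * S := by
    rw [Matrix.mul_assoc T, ← h, Matrix.mul_assoc, mul_nonsing_inv_cancel_left T _ hT]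
  exact ⟨hGinv.mul_mul_transpose_of_isUnit hT,
    mul_mul_mul_transpose_eq_of_mul_eq (isHermitian_iff_isSymm.mp hGinv.isHermitian) hS hAT⟩
end

section
/- Let Â = V Λ V⁻¹ with V invertible and Λ diagonal (a diagonalization of Â), and let M be a real n×n matrix. Then Â M = M Âᵀ if and only if there exists a matrix D commuting with Λ such that M = V D Vᵀ. -/
/-! Writing `M = V D Vᵀ` with `D := V⁻¹ M V⁻ᵀ` (always possible for invertible `V`), both sides of
`Â M = M Âᵀ` become `V (Λ D) Vᵀ` and `V (D Λᵀ) Vᵀ`; cancelling the invertible outer factors leaves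
`Λ D = D Λᵀ`, and `Λᵀ = Λ` for diagonal `Λ`. -/

open Matrix

namespace Matrix

variable {n α : Type*} [Fintype n] [DecidableEq n] [CommRing α]

lemma eq_mul_inv_mul_transpose_inv_mul_transpose (V M : Matrix n n α) [Invertible V] :
    M = V * (V⁻¹ * M * Vᵀ⁻¹) * Vᵀ := by
  simp only [Matrix.mul_assoc, mul_inv_cancel_left_of_invertible, inv_mul_of_invertible,
    Matrix.mul_one]

lemma mul_mul_transpose_inj (V : Matrix n n α) [Invertible V] {X Y : Matrix n n α} :
    V * X * Vᵀ = V * Y * Vᵀ ↔ X = Y := by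
  rw [mul_left_inj_of_invertible, mul_right_inj_of_invertible]

lemma conj_mul_congr_eq_congr_mul_conj_transpose_iff (V Λ D : Matrix n n α) [Invertible V] :
    V * Λ * V⁻¹ * (V * D * Vᵀ) = V * D * Vᵀ * (V * Λ * V⁻¹)ᵀ ↔ Λ * D = D * Λᵀ := by
  have hlhs : V * Λ * V⁻¹ * (V * D * Vᵀ) = V * (Λ * D) * Vᵀ := by
    simp only [Matrix.mul_assoc, inv_mul_cancel_left_of_invertible]
  have hrhs : V * D * Vᵀ * (V * Λ * V⁻¹)ᵀ = V * (D * Λᵀ) * Vᵀ := by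
    simp only [transpose_mul, transpose_nonsing_inv, Matrix.mul_assoc,
      mul_inv_cancel_left_of_invertible]
  rw [hlhs, hrhs, mul_mul_transpose_inj]

end Matrix

theorem stmt_5 {n : ℕ} (Ahat V M : Matrix (Fin n) (Fin n) ℝ)
    (l : Fin n → ℝ) (hV : IsUnit V.det)
    (hA : Ahat = V * Matrix.diagonal l * V⁻¹) :
    Ahat * M = M * Ahatᵀ ↔
      ∃ D : Matrix (Fin n) (Fin n) ℝ,
        D * Matrix.diagonal l = Matrix.diagonal l * D ∧ M = V * D * Vᵀ := by
  have : Invertible V := V.invertibleOfIsUnitDet hV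
  subst hA
  constructor
  · intro h
    have hM := eq_mul_inv_mul_transpose_inv_mul_transpose V M
    rw [hM, conj_mul_congr_eq_congr_mul_conj_transpose_iff, diagonal_transpose] at h
    exact ⟨_, h.symm, hM⟩
  · rintro ⟨D, hD, rfl⟩
    rw [conj_mul_congr_eq_congr_mul_conj_transpose_iff, diagonal_transpose]
    exact hD.symm
end

section
/- Let Z, W be real n×m matrices with Zᵀ Z = Wᵀ W, Q a real n×n matrix, and L a real m×r matrix such that Z L has full column rank and the column space of Z L equals the column space of Z. Then Q Z = W if and only if Q Z L = W L. -/
/-!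
Since the column space of `Z * L` contains that of `Z`, there is `M` with `Z * L * M = Z`.
The Gram identity `Zᵀ * Z = Wᵀ * W` makes `Z` and `W` have the same right annihilator
(`Z * B = 0 ↔ Bᵀ * Zᵀ * Z * B = 0`), so also `W * L * M = W`. Multiplying
`Q * Z * L = W * L` on the right by `M` gives `Q * Z = W`.
-/

open Matrix

namespace Matrix

variable {m m' n p R : Type*} [Fintype n]

theorem mul_eq_zero_iff_of_conjTranspose_mul_self_eq [PartialOrder R] [Ring R] [StarRing R]
    [StarOrderedRing R] [NoZeroDivisors R] [Fintype m] [Fintype m']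
    {Z : Matrix m n R} {W : Matrix m' n R}
    (h : Zᴴ * Z = Wᴴ * W) (B : Matrix n p R) : Z * B = 0 ↔ W * B = 0 := by
  rw [← conjTranspose_mul_self_mul_eq_zero, h, conjTranspose_mul_self_mul_eq_zero]

theorem exists_mul_eq_of_range_mulVecLin_le [CommSemiring R] [DecidableEq n] [Fintype p]
    {A : Matrix m n R} {B : Matrix m p R}
    (h : LinearMap.range A.mulVecLin ≤ LinearMap.range B.mulVecLin) :
    ∃ M : Matrix p n R, B * M = A := by
  have hcol (j : n) : ∃ v, B *ᵥ v = A.col j := by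
    simpa [mulVec_single_one] using h ⟨Pi.single j 1, rfl⟩
  choose v hv using hcol
  refine ⟨of fun i j => v j i, ext fun i j => ?_⟩
  simpa [mulVec, dotProduct, mul_apply] using congrFun (hv j) i

end Matrix

theorem stmt_9_general {n m r : ℕ} (Z W : Matrix (Fin n) (Fin m) ℝ)
    (Q : Matrix (Fin n) (Fin n) ℝ) (L : Matrix (Fin m) (Fin r) ℝ)
    (hZW : Zᵀ * Z = Wᵀ * W)
    (hrange : LinearMap.range (Z * L).mulVecLin = LinearMap.range Z.mulVecLin) :
    Q * Z = W ↔ Q * (Z * L) = W * L := by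
  refine ⟨fun h => by rw [← Matrix.mul_assoc, h], fun h => ?_⟩
  obtain ⟨M, hM⟩ := exists_mul_eq_of_range_mulVecLin_le hrange.ge
  have hZW' : Zᴴ * Z = Wᴴ * W := by simpa only [conjTranspose_eq_transpose_of_trivial] using hZW
  have hWM : W * (L * M) = W := by
    have hZ : Z * (L * M - 1) = 0 := by
      rw [Matrix.mul_sub, Matrix.mul_one, ← Matrix.mul_assoc, hM, sub_self]
    simpa [Matrix.mul_sub, sub_eq_zero] using
      (mul_eq_zero_iff_of_conjTranspose_mul_self_eq hZW' _).1 hZ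
  calc Q * Z = Q * (Z * L * M) := by rw [hM]
    _ = W * (L * M) := by rw [← Matrix.mul_assoc, h, Matrix.mul_assoc]
    _ = W := hWM

theorem stmt_9 {n m r : ℕ} (Z W : Matrix (Fin n) (Fin m) ℝ)
    (Q : Matrix (Fin n) (Fin n) ℝ) (L : Matrix (Fin m) (Fin r) ℝ)
    (hZW : Zᵀ * Z = Wᵀ * W)
    (hfull : LinearIndependent ℝ (fun j : Fin r => (Z * L)ᵀ j))
    (hrange : LinearMap.range (Z * L).mulVecLin = LinearMap.range Z.mulVecLin) :
    Q * Z = W ↔ Q * (Z * L) = W * L :=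
  stmt_9_general Z W Q L hZW hrange
end

section
/- Let A, B ∈ ℝ^{n×m} with Aᵀ A = Bᵀ B and rank A = m < n. Let Ā ∈ ℝ^{n×(n−m)} and B̄ ∈ ℝ^{n×(n−m)} satisfy Āᵀ Ā = I, B̄ᵀ B̄ = I, B̄ᵀ B = 0, Āᵀ A = 0. Then for any Q ∈ ℝ^{n×n}: Q is orthogonal with Q A = B if and only if there exists U ∈ O(n−m) with Q = B A⁺ + B̄ U Āᵀ, where A⁺ = (Aᵀ A)⁻¹ Aᵀ is the left pseudoinverse of A. -/
/-!
Extend `A` and `B` to square matrices `[A | Ā]` and `[B | B̄]`. Since `Āᵀ Ā = 1`, `Āᵀ A = 0` and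
`Aᵀ A` is invertible, `[A⁺; Āᵀ]` is a left, hence two-sided, inverse of `[A | Ā]`, which gives
the resolution of the identity `A A⁺ + Ā Āᵀ = 1`, and likewise `B B⁺ + B̄ B̄ᵀ = 1` with
`B⁺ = (Aᵀ A)⁻¹ Bᵀ`. Consequently every `Q` satisfies `Q = (Q A) A⁺ + (Q Ā) Āᵀ`. If `Q` is orthogonal
with `Q A = B`, then `Bᵀ Q Ā = Aᵀ Ā = 0`, so `Q Ā = B̄ U` with `U = B̄ᵀ Q Ā`, and `U` is orthogonal
because `Q Ā` has orthonormal columns. Conversely, expanding `Qᵀ Q` for `Q = B A⁺ + B̄ U Āᵀ`, the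
cross terms vanish and what is left is `A A⁺ + Ā Āᵀ = 1`.
-/

open Matrix

namespace Matrix

theorem isUnit_of_rank_eq_card {K n : Type*} [Field K] [Fintype n] [DecidableEq n]
    {M : Matrix n n K} (h : M.rank = Fintype.card n) : IsUnit M := by
  rw [← mulVec_surjective_iff_isUnit]
  change Function.Surjective M.mulVecLin
  rw [← LinearMap.range_eq_top]
  apply Submodule.eq_top_of_finrank_eq
  rw [← rank, h, Module.finrank_fintype_fun_eq_card]

variable {R n m k : Type*} [CommRing R] [Fintype n]

theorem transpose_mul_eq_zero_comm {A : Matrix n m R} {A' : Matrix n k R}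
    (h : A'ᵀ * A = 0) : Aᵀ * A' = 0 := by
  rw [← transpose_eq_zero, transpose_mul, transpose_transpose, h]

variable [Fintype m] [Fintype k] [DecidableEq m]

theorem mul_add_mul_eq_one_of_equiv_sum [DecidableEq n] [DecidableEq k] (e : n ≃ m ⊕ k)
    {A : Matrix n m R} {A' : Matrix n k R} {L : Matrix m n R} {L' : Matrix k n R}
    (hLA : L * A = 1) (hLA' : L * A' = 0) (hL'A : L' * A = 0) (hL'A' : L' * A' = 1) :
    A * L + A' * L' = 1 := by
  rw [← fromCols_mul_fromRows, fromCols_mul_fromRows_eq_one_comm e, fromRows_mul_fromCols,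
    hLA, hLA', hL'A, hL'A', fromBlocks_one]

noncomputable abbrev leftPinv (A : Matrix n m R) : Matrix m n R := (Aᵀ * A)⁻¹ * Aᵀ

theorem leftPinv_mul {A : Matrix n m R} (hA : IsUnit (Aᵀ * A)) : leftPinv A * A = 1 := by
  rw [leftPinv, Matrix.mul_assoc]
  exact nonsing_inv_mul _ ((isUnit_iff_isUnit_det _).mp hA)

variable [DecidableEq n] [DecidableEq k]

theorem mul_leftPinv_add_mul_transpose_eq_one (e : n ≃ m ⊕ k) {A : Matrix n m R}
    {A' : Matrix n k R} (hA : IsUnit (Aᵀ * A)) (hA' : A'ᵀ * A' = 1) (hA'A : A'ᵀ * A = 0) :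
    A * leftPinv A + A' * A'ᵀ = 1 := by
  refine mul_add_mul_eq_one_of_equiv_sum e (leftPinv_mul hA) ?_ hA'A hA'
  rw [leftPinv, Matrix.mul_assoc, transpose_mul_eq_zero_comm hA'A, Matrix.mul_zero]

theorem eq_mul_mul_leftPinv_add_mul_mul_transpose (e : n ≃ m ⊕ k) {A : Matrix n m R}
    {A' : Matrix n k R} (hA : IsUnit (Aᵀ * A)) (hA' : A'ᵀ * A' = 1) (hA'A : A'ᵀ * A = 0)
    (Q : Matrix n n R) :
    Q = Q * A * leftPinv A + Q * A' * A'ᵀ := by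
  rw [Matrix.mul_assoc, Matrix.mul_assoc, ← Matrix.mul_add,
    mul_leftPinv_add_mul_transpose_eq_one e hA hA' hA'A, Matrix.mul_one]

section

variable {A B : Matrix n m R} {A' B' : Matrix n k R} {Q : Matrix n n R}

theorem mul_eq_mul_transpose_mul_mul_of_orthogonal (e : n ≃ m ⊕ k) (hA : IsUnit (Aᵀ * A))
    (hAB : Aᵀ * A = Bᵀ * B) (hB' : B'ᵀ * B' = 1) (hB'B : B'ᵀ * B = 0) (hA'A : A'ᵀ * A = 0)
    (hQ : Qᵀ * Q = 1) (hQA : Q * A = B) :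
    Q * A' = B' * (B'ᵀ * Q * A') := by
  have hBQ : Bᵀ * Q = Aᵀ := by
    rw [← hQA, transpose_mul, Matrix.mul_assoc, hQ, Matrix.mul_one]
  have hB := mul_leftPinv_add_mul_transpose_eq_one e (hAB ▸ hA) hB' hB'B
  calc Q * A' = (B * leftPinv B + B' * B'ᵀ) * (Q * A') := by rw [hB, Matrix.one_mul]
    _ = B * ((Bᵀ * B)⁻¹ * (Aᵀ * A')) + B' * (B'ᵀ * Q * A') := by
      simp only [leftPinv, Matrix.add_mul, Matrix.mul_assoc, ← Matrix.mul_assoc Bᵀ Q, hBQ]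
    _ = B' * (B'ᵀ * Q * A') := by
      rw [transpose_mul_eq_zero_comm hA'A, Matrix.mul_zero, Matrix.mul_zero, zero_add]

theorem transpose_mul_self_eq_one_of_mul_eq {U : Matrix k k R} (hB' : B'ᵀ * B' = 1)
    (hQ : Qᵀ * Q = 1) (hA' : A'ᵀ * A' = 1) (hQA' : Q * A' = B' * U) :
    Uᵀ * U = 1 := by
  calc Uᵀ * U = (B' * U)ᵀ * (B' * U) := by
        rw [transpose_mul, Matrix.mul_assoc, ← Matrix.mul_assoc B'ᵀ, hB', Matrix.one_mul]
    _ = A'ᵀ * (Qᵀ * Q) * A' := by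
        rw [← hQA', transpose_mul, Matrix.mul_assoc, Matrix.mul_assoc, Matrix.mul_assoc]
    _ = 1 := by rw [hQ, Matrix.mul_one, hA']

theorem transpose_mul_self_eq_one_of_eq_mul_leftPinv_add (e : n ≃ m ⊕ k)
    (hA : IsUnit (Aᵀ * A)) (hAB : Aᵀ * A = Bᵀ * B) (hA' : A'ᵀ * A' = 1) (hB' : B'ᵀ * B' = 1)
    (hB'B : B'ᵀ * B = 0) (hA'A : A'ᵀ * A = 0) {U : Matrix k k R} (hU : Uᵀ * U = 1) :
    (B * leftPinv A + B' * U * A'ᵀ)ᵀ * (B * leftPinv A + B' * U * A'ᵀ) = 1 := by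
  simp only [leftPinv, transpose_add, transpose_mul, transpose_nonsing_inv, transpose_transpose,
    Matrix.add_mul, Matrix.mul_add, Matrix.mul_assoc]
  simp only [← Matrix.mul_assoc Bᵀ B, ← Matrix.mul_assoc Bᵀ B', ← Matrix.mul_assoc B'ᵀ B,
    ← Matrix.mul_assoc B'ᵀ B', ← hAB, transpose_mul_eq_zero_comm hB'B, hB'B, hB',
    Matrix.zero_mul, Matrix.mul_zero, Matrix.one_mul, add_zero, zero_add,
    ← Matrix.mul_assoc Uᵀ U, hU]
  rw [← Matrix.mul_assoc (Aᵀ * A), mul_nonsing_inv _ ((isUnit_iff_isUnit_det _).mp hA),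
    Matrix.one_mul]
  exact mul_leftPinv_add_mul_transpose_eq_one e hA hA' hA'A

theorem orthogonal_and_mul_eq_iff (e : n ≃ m ⊕ k) (hA : IsUnit (Aᵀ * A))
    (hAB : Aᵀ * A = Bᵀ * B) (hA' : A'ᵀ * A' = 1) (hB' : B'ᵀ * B' = 1) (hB'B : B'ᵀ * B = 0)
    (hA'A : A'ᵀ * A = 0) (Q : Matrix n n R) :
    (Qᵀ * Q = 1 ∧ Q * A = B) ↔
      ∃ U : Matrix k k R, Uᵀ * U = 1 ∧ Q = B * leftPinv A + B' * U * A'ᵀ := by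
  constructor
  · rintro ⟨hQ, hQA⟩
    have hQA' := mul_eq_mul_transpose_mul_mul_of_orthogonal e hA hAB hB' hB'B hA'A hQ hQA
    refine ⟨_, transpose_mul_self_eq_one_of_mul_eq hB' hQ hA' hQA', ?_⟩
    conv_lhs => rw [eq_mul_mul_leftPinv_add_mul_mul_transpose e hA hA' hA'A Q, hQA, hQA']
  · rintro ⟨U, hU, rfl⟩
    refine ⟨transpose_mul_self_eq_one_of_eq_mul_leftPinv_add e hA hAB hA' hB' hB'B hA'A hU, ?_⟩
    rw [Matrix.add_mul, Matrix.mul_assoc B, leftPinv_mul hA, Matrix.mul_one,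
      Matrix.mul_assoc _ A'ᵀ, hA'A, Matrix.mul_zero, add_zero]

end

end Matrix

theorem stmt_10 {n m : ℕ} (A B : Matrix (Fin n) (Fin m) ℝ)
    (Abar Bbar : Matrix (Fin n) (Fin (n - m)) ℝ)
    (hAB : Aᵀ * A = Bᵀ * B) (hrank : A.rank = m) (hmn : m < n)
    (hAbar : Abarᵀ * Abar = 1) (hBbar : Bbarᵀ * Bbar = 1)
    (hBo : Bbarᵀ * B = 0) (hAo : Abarᵀ * A = 0)
    (Q : Matrix (Fin n) (Fin n) ℝ) :
    (Qᵀ * Q = 1 ∧ Q * A = B) ↔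
      ∃ U : Matrix (Fin (n - m)) (Fin (n - m)) ℝ,
        Uᵀ * U = 1 ∧ Q = B * ((Aᵀ * A)⁻¹ * Aᵀ) + Bbar * U * Abarᵀ := by
  have hA : IsUnit (Aᵀ * A) :=
    isUnit_of_rank_eq_card (by rw [rank_transpose_mul_self, hrank, Fintype.card_fin])
  have e : Fin n ≃ Fin m ⊕ Fin (n - m) :=
    (finCongr (Nat.add_sub_cancel' hmn.le).symm).trans finSumFinEquiv.symm
  exact orthogonal_and_mul_eq_iff e hA hAB hAbar hBbar hBo hAo Q
end

section
/- Let P be symmetric positive definite with P⁻¹ Â P symmetric, Q orthogonal, and G diagonal positive definite. Setting T = P Q √G (where √G is the diagonal matrix of square roots of the diagonal of G), the matrix G T⁻¹ Â T is symmetric. -/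
/-! With `M = P⁻¹ Â P` and `D = diag √g`, so that `G = D D` and `T⁻¹ = D⁻¹ Qᵀ P⁻¹`, one has
`G T⁻¹ Â T = D Qᵀ M Q D = (Q D)ᵀ M (Q D)`, a congruence of the symmetric matrix `M`. -/

open Matrix

namespace Matrix

theorem IsSymm.transpose_mul_mul {m n α : Type*} [Fintype m] [CommSemiring α]
    {M : Matrix m m α} (hM : M.IsSymm) (B : Matrix m n α) : (Bᵀ * M * B).IsSymm := by
  rw [IsSymm, transpose_mul, transpose_mul, transpose_transpose, hM.eq, Matrix.mul_assoc]

theorem inv_mul_mul_mul_mul_eq {n α : Type*} [Fintype n] [DecidableEq n] [CommRing α]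
    (X Y A : Matrix n n α) : (X * Y)⁻¹ * A * (X * Y) = Y⁻¹ * (X⁻¹ * A * X) * Y := by
  simp only [mul_inv_rev, Matrix.mul_assoc]

theorem diagonal_sqrt_mul_self {n : Type*} [Fintype n] [DecidableEq n] {g : n → ℝ}
    (hg : ∀ i, 0 ≤ g i) :
    diagonal (fun i => √(g i)) * diagonal (fun i => √(g i)) = diagonal g := by
  rw [diagonal_mul_diagonal]
  exact congrArg diagonal (funext fun i => Real.mul_self_sqrt (hg i))

theorem isUnit_det_diagonal_sqrt {n : Type*} [Fintype n] [DecidableEq n] {g : n → ℝ}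
    (hg : ∀ i, 0 < g i) : IsUnit (diagonal fun i => √(g i)).det := by
  rw [det_diagonal, isUnit_iff_ne_zero]
  exact Finset.prod_ne_zero_iff.2 fun i _ => (Real.sqrt_pos.2 (hg i)).ne'

end Matrix

theorem stmt_15_general {n : ℕ} (Ahat P Q G : Matrix (Fin n) (Fin n) ℝ)
    (hsym : (P⁻¹ * Ahat * P).IsSymm)
    (hQ : Qᵀ * Q = 1)
    (g : Fin n → ℝ) (hg : ∀ i, 0 < g i) (hG : G = Matrix.diagonal g) :
    (G * (P * Q * Matrix.diagonal (fun i => Real.sqrt (g i)))⁻¹ * Ahat *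
        (P * Q * Matrix.diagonal (fun i => Real.sqrt (g i)))).IsSymm := by
  set D := Matrix.diagonal (fun i => Real.sqrt (g i))
  have hDD : D * D = G := hG ▸ diagonal_sqrt_mul_self fun i => (hg i).le
  have hQinv : Q⁻¹ = Qᵀ := inv_eq_left_inv hQ
  have key :
      G * (P * Q * D)⁻¹ * Ahat * (P * Q * D) = (Q * D)ᵀ * (P⁻¹ * Ahat * P) * (Q * D) := by
    calc G * (P * Q * D)⁻¹ * Ahat * (P * Q * D)
        = G * ((Q * D)⁻¹ * (P⁻¹ * Ahat * P) * (Q * D)) := by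
          rw [← inv_mul_mul_mul_mul_eq]
          simp only [Matrix.mul_assoc]
      _ = D * D * D⁻¹ * Qᵀ * (P⁻¹ * Ahat * P) * (Q * D) := by
          rw [Matrix.mul_inv_rev, hQinv, hDD]
          simp only [Matrix.mul_assoc]
      _ = (Q * D)ᵀ * (P⁻¹ * Ahat * P) * (Q * D) := by
          rw [mul_nonsing_inv_cancel_right (A := D) _ (isUnit_det_diagonal_sqrt hg),
            transpose_mul, diagonal_transpose]
  rw [key]
  exact hsym.transpose_mul_mul _

theorem stmt_15 {n : ℕ} (Ahat P Q G : Matrix (Fin n) (Fin n) ℝ)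
    (hP : P.PosDef) (hsym : (P⁻¹ * Ahat * P).IsSymm)
    (hQ : Qᵀ * Q = 1)
    (g : Fin n → ℝ) (hg : ∀ i, 0 < g i) (hG : G = Matrix.diagonal g) :
    (G * (P * Q * Matrix.diagonal (fun i => Real.sqrt (g i)))⁻¹ * Ahat *
        (P * Q * Matrix.diagonal (fun i => Real.sqrt (g i)))).IsSymm :=
  stmt_15_general Ahat P Q G hsym hQ g hg hG
end
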